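/- arXiv:1912.09366 — 7 statements merged into one kernel-verified Lean document; each statement's English description precedes it below -/
import Mathlib

section
/- Let J ↪ E ↠ C be an extension of projective systems of V-algebras (written as a projective system of algebra extensions indexed by a directed set N, with structure maps α, β, γ). If for every m ∈ N there exist n₁ ≥ m and j₁ ∈ ℕ* with α_{m,n₁}(A_{n₁}^{j₁}) ⊆ π·A_m, and for every n there exist n₂ ≥ n and j₂ ∈ ℕ* with γ_{n,n₂}(C_{n₂}^{j₂}) ⊆ π·C_n (i.e., both A and C are nilpotent mod π), then for every m there exist n and j with β_{m,n}(B_n^j) ⊆ π·B_m (i.e., the middle term B = E is nilpotent mod π); in fact one can take j = j₁·j₂. -/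
/-!
Above `n₁`, the `j₂`-fold products of `B` map into `π B_{n₁} + i(A_{n₁})`: their images in `C_{n₁}`
are divisible by `π`, and `B_{n₁} → C_{n₁}` is surjective with kernel `i(A_{n₁})`. Submodules of the
form `π B + i(M)` multiply like `M`, i.e. `(π B + i M)(π B + i N) ⊆ π B + i(MN)`, so the
`j₁ j₂`-fold products, being `j₁`-fold products of `j₂`-fold products, land in
`π B_{n₁} + i(A_{n₁}^{j₁})`, which maps into `π B_m` because `A` is nilpotent mod `π`.
-/

/-- Product of `V`-submodules of a non-unital algebra. -/
def Submodule.mulSpan {V A : Type*} [CommRing V] [NonUnitalRing A] [Module V A]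
    (M N : Submodule V A) : Submodule V A :=
  Submodule.span V {x : A | ∃ m ∈ M, ∃ n ∈ N, x = m * n}

/-- `pw M j = M^(j+1)`: the span of `(j+1)`-fold products of elements of `M`. -/
def Submodule.pw {V A : Type*} [CommRing V] [NonUnitalRing A] [Module V A]
    (M : Submodule V A) : ℕ → Submodule V A
  | 0 => M
  | (j + 1) => M.mulSpan (Submodule.pw M j)

open scoped Pointwise

namespace Submodule

theorem mem_smul_top_sup_map_iff {V A B : Type*} [CommRing V] [AddCommGroup A] [Module V A]
    [AddCommGroup B] [Module V B] (π : V) (i : A →ₗ[V] B) (M : Submodule V A) (x : B) :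
    x ∈ π • (⊤ : Submodule V B) ⊔ M.map i ↔ ∃ b : B, ∃ a ∈ M, π • b + i a = x := by
  simp only [mem_sup, mem_smul_pointwise_iff_exists, mem_top, true_and, mem_map]
  constructor
  · rintro ⟨_, ⟨b, rfl⟩, _, ⟨a, ha, rfl⟩, rfl⟩
    exact ⟨b, a, ha, rfl⟩
  · rintro ⟨b, a, ha, rfl⟩
    exact ⟨_, ⟨b, rfl⟩, _, ⟨a, ha, rfl⟩, rfl⟩

variable {V A : Type*} [CommRing V] [NonUnitalRing A] [Module V A]

theorem mul_mem_mulSpan {M N : Submodule V A} {m n : A} (hm : m ∈ M) (hn : n ∈ N) :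
    m * n ∈ M.mulSpan N :=
  subset_span ⟨m, hm, n, hn, rfl⟩

theorem mulSpan_le {M N P : Submodule V A} (h : ∀ m ∈ M, ∀ n ∈ N, m * n ∈ P) :
    M.mulSpan N ≤ P := by
  rw [mulSpan, span_le]
  rintro x ⟨m, hm, n, hn, rfl⟩
  exact h m hm n hn

theorem mulSpan_mono {M M' N N' : Submodule V A} (hM : M ≤ M') (hN : N ≤ N') :
    M.mulSpan N ≤ M'.mulSpan N' :=
  mulSpan_le fun _ hm _ hn => mul_mem_mulSpan (hM hm) (hN hn)

theorem mulSpan_assoc_le [SMulCommClass V A A] (M N P : Submodule V A) :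
    M.mulSpan (N.mulSpan P) ≤ (M.mulSpan N).mulSpan P := by
  refine mulSpan_le fun m hm _ hn => ?_
  suffices N.mulSpan P ≤ ((M.mulSpan N).mulSpan P).comap (LinearMap.mulLeft V m) from this hn
  refine mulSpan_le fun a ha b hb => ?_
  rw [mem_comap, LinearMap.mulLeft_apply, ← mul_assoc]
  exact mul_mem_mulSpan (mul_mem_mulSpan hm ha) hb

theorem pw_add_le_mulSpan [SMulCommClass V A A] (M : Submodule V A) :
    ∀ j k, M.pw (j + k + 1) ≤ (M.pw j).mulSpan (M.pw k)
  | 0, k => by rw [Nat.zero_add]; rfl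
  | j + 1, k => by
    rw [show j + 1 + k + 1 = j + k + 1 + 1 by omega]
    calc M.mulSpan (M.pw (j + k + 1))
        ≤ M.mulSpan ((M.pw j).mulSpan (M.pw k)) := mulSpan_mono le_rfl (pw_add_le_mulSpan M j k)
      _ ≤ (M.mulSpan (M.pw j)).mulSpan (M.pw k) := mulSpan_assoc_le _ _ _

/-- `M^((j+1)(k+1)) ≤ (M^(k+1))^(j+1)`, in the shifted indexing of `pw`. -/
theorem pw_le_pw_pw [SMulCommClass V A A] (M : Submodule V A) :
    ∀ j k, M.pw (j * k + j + k) ≤ (M.pw k).pw j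
  | 0, k => by rw [Nat.zero_mul, Nat.zero_add]; exact le_rfl
  | j + 1, k => by
    rw [show (j + 1) * k + (j + 1) + k = k + (j * k + j + k) + 1 by ring]
    exact (pw_add_le_mulSpan M k _).trans (mulSpan_mono le_rfl (pw_le_pw_pw M j k))

variable {B : Type*} [NonUnitalRing B] [Module V B]

theorem pw_le_comap_pw (f : A →ₙₐ[V] B) {M : Submodule V A} {N : Submodule V B}
    (h : M ≤ N.comap (f : A →ₗ[V] B)) : ∀ j, M.pw j ≤ (N.pw j).comap (f : A →ₗ[V] B)
  | 0 => h
  | j + 1 => mulSpan_le fun a ha b hb => by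
    change f (a * b) ∈ N.pw (j + 1)
    rw [map_mul]
    exact mul_mem_mulSpan (h ha) (pw_le_comap_pw f h j hb)

theorem mulSpan_smul_top_sup_map_le [SMulCommClass V B B] [IsScalarTower V B B]
    (π : V) (i : A →ₙₐ[V] B) (M N : Submodule V A) :
    (π • ⊤ ⊔ M.map (i : A →ₗ[V] B)).mulSpan (π • ⊤ ⊔ N.map (i : A →ₗ[V] B)) ≤
      π • ⊤ ⊔ (M.mulSpan N).map (i : A →ₗ[V] B) := by
  refine mulSpan_le fun x hx y hy => ?_
  obtain ⟨b, a, ha, rfl⟩ := (mem_smul_top_sup_map_iff π _ M x).1 hx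
  obtain ⟨c, d, hd, rfl⟩ := (mem_smul_top_sup_map_iff π _ N y).1 hy
  refine (mem_smul_top_sup_map_iff π _ _ _).2
    ⟨b * (π • c + i d) + i a * c, a * d, mul_mem_mulSpan ha hd, ?_⟩
  simp only [LinearMap.coe_coe, map_mul, smul_add, mul_add, add_mul, smul_mul_assoc,
    mul_smul_comm]
  abel

theorem pw_smul_top_sup_map_le [SMulCommClass V B B] [IsScalarTower V B B]
    (π : V) (i : A →ₙₐ[V] B) (M : Submodule V A) :
    ∀ j, (π • ⊤ ⊔ M.map (i : A →ₗ[V] B)).pw j ≤ π • ⊤ ⊔ (M.pw j).map (i : A →ₗ[V] B)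
  | 0 => le_rfl
  | j + 1 => (mulSpan_mono le_rfl (pw_smul_top_sup_map_le π i M j)).trans
    (mulSpan_smul_top_sup_map_le π i M _)

theorem mem_smul_top_sup_map_of_apply_eq_smul {C : Type*} [NonUnitalRing C] [Module V C]
    (π : V) (i : A →ₙₐ[V] B) {p : B →ₙₐ[V] C} (hp : Function.Surjective p)
    (hexact : ∀ b, p b = 0 → b ∈ Set.range i) {b : B} {c : C} (hb : p b = π • c) :
    b ∈ π • ⊤ ⊔ (⊤ : Submodule V A).map (i : A →ₗ[V] B) := by
  obtain ⟨b', rfl⟩ := hp c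
  obtain ⟨a, ha⟩ := hexact (b - π • b') (by rw [map_sub, map_smul, hb, sub_self])
  refine (mem_smul_top_sup_map_iff π _ ⊤ b).2 ⟨b', a, mem_top, ?_⟩
  rw [LinearMap.coe_coe, ha]
  abel

theorem exists_smul_eq_of_mem_smul_top_sup_map {A' B' : Type*} [NonUnitalRing A'] [Module V A']
    [NonUnitalRing B'] [Module V B'] (π : V) {i : A →ₙₐ[V] B} {i' : A' →ₙₐ[V] B'}
    {f : B →ₙₐ[V] B'} {g : A →ₙₐ[V] A'} (hsq : i'.comp g = f.comp i) {M : Submodule V A}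
    (hM : ∀ a ∈ M, ∃ y, g a = π • y) {x : B} (hx : x ∈ π • ⊤ ⊔ M.map (i : A →ₗ[V] B)) :
    ∃ y, f x = π • y := by
  obtain ⟨b, a, ha, rfl⟩ := (mem_smul_top_sup_map_iff π _ M x).1 hx
  obtain ⟨y, hy⟩ := hM a ha
  refine ⟨f b + i' y, ?_⟩
  rw [LinearMap.coe_coe, map_add, map_smul, ← NonUnitalAlgHom.comp_apply, ← hsq,
    NonUnitalAlgHom.comp_apply, hy, map_smul, smul_add]

end Submodule

theorem extension_nilpotent_mod_pi_general
    {V : Type*} [CommRing V] (π : V)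
    {ι : Type*} [Preorder ι]
    (A B C : ι → Type*)
    [∀ n, NonUnitalRing (A n)] [∀ n, Module V (A n)]
    [∀ n, NonUnitalRing (B n)] [∀ n, Module V (B n)]
    [∀ n, SMulCommClass V (B n) (B n)] [∀ n, IsScalarTower V (B n) (B n)]
    [∀ n, NonUnitalRing (C n)] [∀ n, Module V (C n)]
    -- structure maps of the three projective systems
    (α : ∀ m n : ι, m ≤ n → (A n →ₙₐ[V] A m))
    (β : ∀ m n : ι, m ≤ n → (B n →ₙₐ[V] B m))
    (γ : ∀ m n : ι, m ≤ n → (C n →ₙₐ[V] C m))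
    (hβcomp : ∀ (m n p : ι) (h1 : m ≤ n) (h2 : n ≤ p),
      (β m n h1).comp (β n p h2) = β m p (h1.trans h2))
    -- the level-wise extension `A_n ↪ B_n ↠ C_n`
    (i : ∀ n, A n →ₙₐ[V] B n) (p : ∀ n, B n →ₙₐ[V] C n)
    (hp : ∀ n, Function.Surjective (p n))
    (hexact : ∀ n, ∀ b : B n, p n b = 0 ↔ b ∈ Set.range (i n))
    (hsq_i : ∀ (m n : ι) (h : m ≤ n), (i m).comp (α m n h) = (β m n h).comp (i n))
    (hsq_p : ∀ (m n : ι) (h : m ≤ n), (p m).comp (β m n h) = (γ m n h).comp (p n))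
    -- `A` is nilpotent mod `π`
    (hA : ∀ m : ι, ∃ n : ι, ∃ h : m ≤ n, ∃ j : ℕ,
      ∀ x ∈ (⊤ : Submodule V (A n)).pw j, ∃ y : A m, α m n h x = π • y)
    -- `C` is nilpotent mod `π`
    (hC : ∀ m : ι, ∃ n : ι, ∃ h : m ≤ n, ∃ j : ℕ,
      ∀ x ∈ (⊤ : Submodule V (C n)).pw j, ∃ y : C m, γ m n h x = π • y) :
    -- then `B` is nilpotent mod `π`
    ∀ m : ι, ∃ n : ι, ∃ h : m ≤ n, ∃ j : ℕ,
      ∀ x ∈ (⊤ : Submodule V (B n)).pw j, ∃ y : B m, β m n h x = π • y := by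
  intro m
  obtain ⟨n₁, h₁, j₁, hα⟩ := hA m
  obtain ⟨n₂, h₂, j₂, hγ⟩ := hC n₁
  refine ⟨n₂, h₁.trans h₂, j₁ * j₂ + j₁ + j₂, fun x hx => ?_⟩
  have hβ : (⊤ : Submodule V (B n₂)).pw j₂ ≤ (π • ⊤ ⊔ (⊤ : Submodule V (A n₁)).map
      (i n₁ : A n₁ →ₗ[V] B n₁)).comap (β n₁ n₂ h₂ : B n₂ →ₗ[V] B n₁) := fun z hz => by
    obtain ⟨c, hc⟩ := hγ (p n₂ z) (Submodule.pw_le_comap_pw (p n₂) le_top j₂ hz)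
    exact Submodule.mem_smul_top_sup_map_of_apply_eq_smul π (i n₁) (hp n₁)
      (fun b => (hexact n₁ b).1) ((DFunLike.congr_fun (hsq_p n₁ n₂ h₂) z).trans hc)
  have hx' : β n₁ n₂ h₂ x ∈ π • ⊤ ⊔ ((⊤ : Submodule V (A n₁)).pw j₁).map
      (i n₁ : A n₁ →ₗ[V] B n₁) := Submodule.pw_smul_top_sup_map_le π (i n₁) ⊤ j₁
    (Submodule.pw_le_comap_pw _ hβ j₁ (Submodule.pw_le_pw_pw _ j₁ j₂ hx))
  rw [← hβcomp m n₁ n₂ h₁ h₂]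
  exact Submodule.exists_smul_eq_of_mem_smul_top_sup_map π (hsq_i m n₁ h₁) hα hx'

theorem extension_nilpotent_mod_pi
    {V : Type*} [CommRing V] (π : V)
    {ι : Type*} [Preorder ι]
    (A B C : ι → Type*)
    [∀ n, NonUnitalRing (A n)] [∀ n, Module V (A n)]
    [∀ n, SMulCommClass V (A n) (A n)] [∀ n, IsScalarTower V (A n) (A n)]
    [∀ n, NonUnitalRing (B n)] [∀ n, Module V (B n)]
    [∀ n, SMulCommClass V (B n) (B n)] [∀ n, IsScalarTower V (B n) (B n)]
    [∀ n, NonUnitalRing (C n)] [∀ n, Module V (C n)]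
    [∀ n, SMulCommClass V (C n) (C n)] [∀ n, IsScalarTower V (C n) (C n)]
    -- structure maps of the three projective systems
    (α : ∀ m n : ι, m ≤ n → (A n →ₙₐ[V] A m))
    (β : ∀ m n : ι, m ≤ n → (B n →ₙₐ[V] B m))
    (γ : ∀ m n : ι, m ≤ n → (C n →ₙₐ[V] C m))
    (hβcomp : ∀ (m n p : ι) (h1 : m ≤ n) (h2 : n ≤ p),
      (β m n h1).comp (β n p h2) = β m p (h1.trans h2))
    -- the level-wise extension `A_n ↪ B_n ↠ C_n`
    (i : ∀ n, A n →ₙₐ[V] B n) (p : ∀ n, B n →ₙₐ[V] C n)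
    (hi : ∀ n, Function.Injective (i n))
    (hp : ∀ n, Function.Surjective (p n))
    (hexact : ∀ n, ∀ b : B n, p n b = 0 ↔ b ∈ Set.range (i n))
    (hsq_i : ∀ (m n : ι) (h : m ≤ n), (i m).comp (α m n h) = (β m n h).comp (i n))
    (hsq_p : ∀ (m n : ι) (h : m ≤ n), (p m).comp (β m n h) = (γ m n h).comp (p n))
    -- `A` is nilpotent mod `π`
    (hA : ∀ m : ι, ∃ n : ι, ∃ h : m ≤ n, ∃ j : ℕ,
      ∀ x ∈ (⊤ : Submodule V (A n)).pw j, ∃ y : A m, α m n h x = π • y)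
    -- `C` is nilpotent mod `π`
    (hC : ∀ m : ι, ∃ n : ι, ∃ h : m ≤ n, ∃ j : ℕ,
      ∀ x ∈ (⊤ : Submodule V (C n)).pw j, ∃ y : C m, γ m n h x = π • y) :
    -- then `B` is nilpotent mod `π`
    ∀ m : ι, ∃ n : ι, ∃ h : m ≤ n, ∃ j : ℕ,
      ∀ x ∈ (⊤ : Submodule V (B n)).pw j, ∃ y : B m, β m n h x = π • y :=
  extension_nilpotent_mod_pi_general π A B C α β γ hβcomp i p hp hexact hsq_i hsq_p hA hC
end

section
/- Let e be an element of a V-algebra E such that x := e - e² satisfies: x lies in an ideal J, φ(x) ∈ J for all power series φ ∈ tℤ[[t]] (evaluation makes sense, e.g., J is complete in a suitable topology in which powers of x converge). Define φ(x) := Σ_{n≥1} binom(2n-1, n) x^n. Then ê := e + (2e-1)·φ(x) satisfies ê² = ê and ê - e ∈ J. Equivalently, the formal power series φ(t) = Σ_{n≥1} binom(2n-1,n) t^n in ℤ[[t]] satisfies φ(t)² + φ(t) = t/(1-4t) in ℤ[[t]]. -/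
/-!
Let `C` be the Catalan series. Then `D := X * C` satisfies `D² - D + X = 0`, and differentiating
gives `D' * (1 - 2D) = 1`. Since `(n + 1) * catalan n = centralBinom n`, `D'` is the series
`B = Σ centralBinom n Xⁿ = 1 + 2φ`. Squaring, `B² * (1 - 4X) = B² * (1 - 2D)² = 1`, which is
`4 * ((1 - 4X) * (φ² + φ) - X) = 0`.
-/

open PowerSeries

noncomputable def cqSeries : PowerSeries ℤ :=
  PowerSeries.mk fun n => if n = 0 then 0 else (Nat.choose (2 * n - 1) n : ℤ)

theorem Nat.centralBinom_eq_two_mul_choose_two_mul_sub_one {n : ℕ} (hn : n ≠ 0) :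
    n.centralBinom = 2 * (2 * n - 1).choose n := by
  obtain ⟨m, rfl⟩ := Nat.exists_eq_add_one_of_ne_zero hn
  rw [Nat.centralBinom_eq_two_mul_choose, show 2 * (m + 1) - 1 = 2 * m + 1 by omega,
    show 2 * (m + 1) = 2 * m + 1 + 1 by omega, Nat.choose_succ_succ', Nat.choose_symm_half]
  ring

namespace PowerSeries

variable (R : Type*) [CommRing R]

noncomputable def centralBinomSeries : R⟦X⟧ := mk fun n => (n.centralBinom : R)

theorem X_mul_catalanSeries_sq_add_X :
    (X * map (Nat.castRingHom R) catalanSeries) ^ 2 + X =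
      X * map (Nat.castRingHom R) catalanSeries := by
  have h := congrArg (map (Nat.castRingHom R)) catalanSeries_sq_mul_X_add_one
  rw [map_add, map_mul, map_pow, map_X, map_one] at h
  linear_combination X * h

theorem derivative_X_mul_catalanSeries :
    d⁄dX R (X * map (Nat.castRingHom R) catalanSeries) = centralBinomSeries R := by
  ext n
  rw [coeff_derivative, coeff_succ_X_mul, coeff_map, catalanSeries_coeff, centralBinomSeries,
    coeff_mk, ← succ_mul_catalan_eq_centralBinom]
  push_cast
  ring

theorem centralBinomSeries_mul_one_sub_two_mul_X_mul_catalanSeries :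
    centralBinomSeries R * (1 - 2 * (X * map (Nat.castRingHom R) catalanSeries)) = 1 := by
  have h := congrArg (d⁄dX R) (X_mul_catalanSeries_sq_add_X R)
  rw [map_add, derivative_pow, derivative_X, derivative_X_mul_catalanSeries] at h
  linear_combination -h

theorem centralBinomSeries_sq_mul_one_sub_four_mul_X :
    centralBinomSeries R ^ 2 * (1 - 4 * X) = 1 := by
  set D := X * map (Nat.castRingHom R) catalanSeries
  have hB := centralBinomSeries_mul_one_sub_two_mul_X_mul_catalanSeries R
  have hD : (1 - 2 * D) ^ 2 = 1 - 4 * X := by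
    linear_combination 4 * X_mul_catalanSeries_sq_add_X R
  calc centralBinomSeries R ^ 2 * (1 - 4 * X)
      = (centralBinomSeries R * (1 - 2 * D)) ^ 2 := by rw [mul_pow, hD]
    _ = 1 := by rw [hB, one_pow]

end PowerSeries

theorem two_mul_cqSeries_add_one : 2 * cqSeries + 1 = centralBinomSeries ℤ := by
  ext n
  rcases eq_or_ne n 0 with rfl | hn
  · simp [cqSeries, centralBinomSeries]
  · rw [map_add, coeff_one, if_neg hn, add_zero, show (2 : ℤ⟦X⟧) = C 2 from rfl, coeff_C_mul]
    simp [cqSeries, centralBinomSeries, hn, Nat.centralBinom_eq_two_mul_choose_two_mul_sub_one hn]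

theorem one_sub_four_mul_X_mul_cqSeries_sq_add_cqSeries :
    (1 - 4 * X) * (cqSeries ^ 2 + cqSeries) = X := by
  have h := centralBinomSeries_sq_mul_one_sub_four_mul_X ℤ
  rw [← two_mul_cqSeries_add_one] at h
  have h4 : (4 : ℤ⟦X⟧) ≠ 0 := fun h4 => by
    simpa [map_ofNat constantCoeff 4] using congrArg constantCoeff h4
  refine mul_left_cancel₀ h4 ?_
  linear_combination h

theorem Commute.sq_sub_self_add_two_mul_sub_one_mul {E : Type*} [Ring E] {e y : E}
    (h : Commute y e) :
    (e + (2 * e - 1) * y) ^ 2 - (e + (2 * e - 1) * y) =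
      (y ^ 2 + y) * (1 - 4 * (e - e ^ 2)) - (e - e ^ 2) := by
  have h' (z : E) : y * (e * z) = e * (y * z) := h.left_comm z
  noncomm_ring
  simp only [h.eq, h']
  abel

theorem cuntz_quillen_idempotent_lifting :
    ((1 - 4 * (PowerSeries.X : PowerSeries ℤ)) * (cqSeries ^ 2 + cqSeries)
        = PowerSeries.X) ∧
    (∀ (E : Type) (_ : Ring E) (e y : E) (J : Ideal E),
      y * e = e * y →
      (y ^ 2 + y) * (1 - 4 * (e - e ^ 2)) = e - e ^ 2 →
      y ∈ J →
      (e + (2 * e - 1) * y) ^ 2 = e + (2 * e - 1) * y ∧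
        (e + (2 * e - 1) * y) - e ∈ J) := by
  refine ⟨one_sub_four_mul_X_mul_cqSeries_sq_add_cqSeries, ?_⟩
  intro E _ e y J hcomm hy hyJ
  refine ⟨?_, ?_⟩
  · rw [← sub_eq_zero, Commute.sq_sub_self_add_two_mul_sub_one_mul hcomm, hy, sub_self]
  · rw [add_sub_cancel_left]
    exact J.mul_mem_left _ hyJ
end

section
/- Fix m ∈ ℕ*, e ∈ ℕ*. For all n ∈ ℕ with n ≥ 1 and j := ⌈n/(em)⌉, the following holds: whenever nonneg integers i₁, …, i_j satisfy 1 ≤ i_k ≤ em and i₁ + ⋯ + i_j = n, one has ⌊i₁/m⌋ + ⋯ + ⌊i_j/m⌋ ≤ ⌊n/m⌋; moreover, there is a choice of such i₁, …, i_j attaining equality with all but at most one i_k divisible by m. -/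
/-!
`⌊·/m⌋` is superadditive, which gives the bound. For equality take `j - 1` full parts `em` and
one part `r ∈ [1, em]` absorbing the rest: `n = r + (j - 1)em` with `j - 1 = ⌊(n - 1)/(em)⌋`,
and as `(j - 1)em` is a multiple of `m`, `⌊n/m⌋ = ⌊r/m⌋ + (j - 1)e`.
-/

theorem Nat.sum_div_le_div_sum {ι : Type*} (s : Finset ι) (f : ι → ℕ) (m : ℕ) :
    ∑ k ∈ s, f k / m ≤ (∑ k ∈ s, f k) / m := by
  classical
  induction s using Finset.induction_on with
  | empty => simp
  | insert a s ha ih =>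
    rw [Finset.sum_insert ha, Finset.sum_insert ha]
    exact (Nat.add_le_add_left ih _).trans Nat.div_add_div_le_add_div

theorem Nat.add_sub_one_div_eq {c n : ℕ} (hc : 0 < c) (hn : 1 ≤ n) :
    (n + c - 1) / c = (n - 1) / c + 1 := by
  rw [show n + c - 1 = n - 1 + c by omega, Nat.add_div_right _ hc]

theorem exists_cons_decomposition {m e r q n : ℕ} (hm : 0 < m) (hr : 1 ≤ r) (hre : r ≤ e * m)
    (hn : r + q * (e * m) = n) :
    ∃ i : Fin (q + 1) → ℕ,
      (∀ k, 1 ≤ i k ∧ i k ≤ e * m) ∧ (∑ k, i k) = n ∧ (∑ k, i k / m) = n / m ∧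
      ∃ k₀, ∀ k, k ≠ k₀ → m ∣ i k := by
  subst hn
  refine ⟨Fin.cons r fun _ => e * m, ?_, ?_, ?_, 0, ?_⟩
  · exact Fin.cases ⟨hr, hre⟩ fun _ => ⟨hr.trans hre, le_rfl⟩
  · simp [Fin.sum_univ_succ]
  · rw [← mul_assoc, Nat.add_mul_div_right _ _ hm]
    simp [Fin.sum_univ_succ, Nat.mul_div_cancel e hm]
  · intro k hk
    obtain ⟨k, rfl⟩ := Fin.exists_succ_eq.mpr hk
    simp

theorem floor_sum_decomposition (m e : ℕ) (hm : 1 ≤ m) (he : 1 ≤ e)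
    (n : ℕ) (hn : 1 ≤ n) :
    (∀ i : Fin ((n + e * m - 1) / (e * m)) → ℕ,
      (∀ k, 1 ≤ i k ∧ i k ≤ e * m) → (∑ k, i k) = n →
      (∑ k, i k / m) ≤ n / m) ∧
    (∃ i : Fin ((n + e * m - 1) / (e * m)) → ℕ,
      (∀ k, 1 ≤ i k ∧ i k ≤ e * m) ∧ (∑ k, i k) = n ∧
      (∑ k, i k / m) = n / m ∧
      ∃ k₀, ∀ k, k ≠ k₀ → m ∣ i k) := by
  refine ⟨fun i _ hsum =>
    (Nat.sum_div_le_div_sum _ i m).trans (Nat.div_le_div_right hsum.le), ?_⟩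
  have hc : 0 < e * m := Nat.mul_pos he hm
  have hn_eq : (n - 1) % (e * m) + 1 + (n - 1) / (e * m) * (e * m) = n := by
    have := Nat.mod_add_div' (n - 1) (e * m)
    omega
  rw [Nat.add_sub_one_div_eq hc hn]
  exact exists_cons_decomposition hm (Nat.le_add_left _ _) (Nat.mod_lt _ hc) hn_eq
end

section
/- For all integers m ≥ 1, j ≥ 0 and i₀, …, i_{2j} ≥ 0 with i := i₀ + ⋯ + i_{2j}: if i < 4jm then ⌊j/m⌋ ≥ ⌊(6j + 2i)/((6 + 8m)·m)⌋; and if i ≥ 4jm (with j ≥ 0, allowing j = 0) then ⌊j/m⌋ + Σ_{l=0}^{2j} ⌊i_l/m⌋ ≥ ⌊(6j + 2i)/(8m)⌋. Consequently, ⌊j/m⌋ + Σ_{l=0}^{2j} ⌊i_l/m⌋ ≥ ⌊(6j + 2i)/((6+8m)·8m)⌋ always, and conversely ⌊j/m⌋ + Σ_{l=0}^{2j} ⌊i_l/m⌋ ≤ ⌊(6j + 2i)/m⌋. -/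
/-!
Statement 9: Degree estimates from Lemma `cal_L`.  For integers `m ≥ 1`, `j ≥ 0` and
`i₀, …, i_{2j} ≥ 0` with `i := i₀ + ⋯ + i_{2j}` (all floors are `ℕ`-division):
* if `i < 4jm` then `⌊(6j + 2i)/((6+8m)m)⌋ ≤ ⌊j/m⌋`;
* if `i ≥ 4jm` then `⌊(6j + 2i)/(8m)⌋ ≤ ⌊j/m⌋ + Σ ⌊i_l/m⌋`;
* always `⌊(6j + 2i)/((6+8m)·8m)⌋ ≤ ⌊j/m⌋ + Σ ⌊i_l/m⌋ ≤ ⌊(6j + 2i)/m⌋`.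
-/

theorem degree_estimates (m j : ℕ) (hm : 1 ≤ m) (i : Fin (2 * j + 1) → ℕ) :
    (((∑ l, i l) < 4 * j * m →
        (6 * j + 2 * ∑ l, i l) / ((6 + 8 * m) * m) ≤ j / m) ∧
      (4 * j * m ≤ (∑ l, i l) →
        (6 * j + 2 * ∑ l, i l) / (8 * m) ≤ j / m + ∑ l, i l / m)) ∧
    ((6 * j + 2 * ∑ l, i l) / ((6 + 8 * m) * (8 * m)) ≤ j / m + ∑ l, i l / m) ∧
    (j / m + ∑ l, i l / m ≤ (6 * j + 2 * ∑ l, i l) / m) := by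
  have hm0 : 0 < m := hm
  set S := ∑ l, i l with hSdef
  set T := ∑ l, i l / m with hTdef
  -- m * T ≤ S
  have hTS : m * T ≤ S := by
    rw [hTdef, hSdef, Finset.mul_sum]
    exact Finset.sum_le_sum fun l _ => Nat.mul_div_le (i l) m
  -- S < m * T + (2*j+1) * m
  have hSm : S < m * T + (2 * j + 1) * m := by
    have h1 : S < ∑ l : Fin (2 * j + 1), (m * (i l / m) + m) := by
      refine Finset.sum_lt_sum_of_nonempty Finset.univ_nonempty fun l _ => ?_
      have := Nat.div_add_mod (i l) m
      have := Nat.mod_lt (i l) hm0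
      omega
    calc S < ∑ l : Fin (2 * j + 1), (m * (i l / m) + m) := h1
      _ = m * T + (2 * j + 1) * m := by
          rw [Finset.sum_add_distrib, ← Finset.mul_sum, Finset.sum_const,
            Finset.card_univ, Fintype.card_fin, smul_eq_mul, mul_comm]
  have hj : j < m * (j / m) + m := by
    have := Nat.div_add_mod j m
    have := Nat.mod_lt j hm0
    omega
  have part1a : S < 4 * j * m → (6 * j + 2 * S) / ((6 + 8 * m) * m) ≤ j / m := by
    intro h
    have hle : 6 * j + 2 * S ≤ (6 + 8 * m) * j := by nlinarith
    calc (6 * j + 2 * S) / ((6 + 8 * m) * m)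
        ≤ ((6 + 8 * m) * j) / ((6 + 8 * m) * m) := Nat.div_le_div_right hle
      _ = j / m := Nat.mul_div_mul_left j m (by positivity)
  have part1b : 4 * j * m ≤ S → (6 * j + 2 * S) / (8 * m) ≤ j / m + T := by
    intro h
    have hTj : 2 * j ≤ T := by
      by_contra hc
      push_neg at hc
      have h1 : T + 1 ≤ 2 * j := hc
      have h2 : m * (T + 1) ≤ m * (2 * j) := Nat.mul_le_mul_left m h1
      nlinarith
    rw [← Nat.lt_succ_iff, Nat.div_lt_iff_lt_mul (by positivity)]
    have h6 : m * (2 * j) ≤ m * T := Nat.mul_le_mul_left m hTj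
    have hjm : j ≤ j * m := Nat.le_mul_of_pos_right j hm0
    have hexp : (j / m + T).succ * (8 * m) = 8 * (m * (j / m)) + 8 * (m * T) + 8 * m := by
      rw [Nat.succ_eq_add_one]; ring
    rw [hexp]
    have h2S : 2 * S < 2 * (m * T) + 4 * (j * m) + 2 * m := by nlinarith [hSm]
    have h6' : 2 * (j * m) ≤ m * T := by nlinarith [h6]
    have hnn : 0 ≤ m * (j / m) := Nat.zero_le _
    nlinarith [h2S, h6', hjm, hnn, hm0]
  refine ⟨⟨part1a, part1b⟩, ?_, ?_⟩
  · rcases lt_or_ge S (4 * j * m) with h | h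
    · calc (6 * j + 2 * S) / ((6 + 8 * m) * (8 * m))
          ≤ (6 * j + 2 * S) / ((6 + 8 * m) * m) := by
            refine Nat.div_le_div_left ?_ (by positivity)
            exact Nat.mul_le_mul_left _ (by omega)
        _ ≤ j / m := part1a h
        _ ≤ j / m + T := Nat.le_add_right _ _
    · calc (6 * j + 2 * S) / ((6 + 8 * m) * (8 * m))
          ≤ (6 * j + 2 * S) / (8 * m) := by
            refine Nat.div_le_div_left ?_ (by positivity)
            nlinarith
        _ ≤ j / m + T := part1b h
  · rw [Nat.le_div_iff_mul_le hm0]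
    have hjj : (j / m) * m ≤ j := Nat.div_mul_le_self j m
    have : m * T ≤ S := hTS
    nlinarith
end

section
/- Let V be a principal ideal domain (e.g., a discrete valuation ring) and R = V[x₁,…,x_n] with the total degree filtration (𝓕_m R = span of monomials of total degree ≤ m). Then R is filtered Noetherian: for every ideal I ⊆ R there exist finitely many f₁,…,f_N ∈ I and l ∈ ℕ such that every g ∈ I with total degree ≤ m can be written g = Σ p_j f_j with p_j ∈ 𝓕_{m+l} R (in fact one can take l = 0, i.e., deg(p_j f_j) ≤ deg(g)). -/
/-!
Work in `V[x₀, x₁, …, xₙ]` and dehomogenize by `x₀ ↦ 1`. Since `V` is Noetherian, the ideal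
generated by the homogeneous polynomials whose dehomogenization lies in `I` is generated by
finitely many of them, `F₁, …, F_N`; their dehomogenizations are the `fᵢ`. If `deg g ≤ m`, the
degree-`m` homogenization of `g` is a combination `∑ qᵢ Fᵢ`, and taking degree-`m` components
makes every `qᵢ Fᵢ` homogeneous of degree `m`. Dehomogenizing does not raise total degree, so
`g` is the combination of the `fᵢ` with the dehomogenized `qᵢ`, with all degrees at most `m`.
-/

open MvPolynomial

theorem Ideal.exists_fin_family_subset_span {A : Type*} [CommSemiring A] [IsNoetherianRing A]
    (S : Set A) : ∃ (N : ℕ) (f : Fin N → A), (∀ i, f i ∈ S) ∧ S ⊆ Ideal.span (Set.range f) := by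
  obtain ⟨s, hsS, hspan⟩ :=
    (Submodule.fg_span_iff_fg_span_finset_subset S).1 (IsNoetherian.noetherian (Ideal.span S))
  obtain ⟨N, f, hf⟩ := s.finite_toSet.fin_embedding
  refine ⟨N, f, fun i => hsS (hf ▸ Set.mem_range_self i), ?_⟩
  rw [hf]
  exact Ideal.subset_span.trans hspan.le

namespace MvPolynomial

section Homogeneous

variable {σ R : Type*} [CommSemiring R]

attribute [local instance] gradedAlgebra in
theorem homogeneousComponent_mul_of_isHomogeneous_right {p q : MvPolynomial σ R} {i : ℕ}
    (hq : q.IsHomogeneous i) (n : ℕ) :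
    homogeneousComponent n (p * q) =
      if i ≤ n then homogeneousComponent (n - i) p * q else 0 := by
  simp only [← decomposition.decompose'_apply]
  exact DirectSum.coe_decompose_mul_of_right_mem (homogeneousSubmodule σ R) n hq

theorem exists_homogeneous_combination {ι : Type*} [Fintype ι] {f : ι → MvPolynomial σ R}
    {df : ι → ℕ} (hf : ∀ i, (f i).IsHomogeneous (df i)) {h : MvPolynomial σ R} {d : ℕ}
    (hh : h.IsHomogeneous d) (hmem : h ∈ Ideal.span (Set.range f)) :
    ∃ r : ι → MvPolynomial σ R, h = ∑ i, r i * f i ∧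
      ∀ i, (r i).totalDegree ≤ d ∧ (r i * f i).IsHomogeneous d := by
  classical
  obtain ⟨q, hq⟩ := Ideal.mem_span_range_iff_exists_fun.1 hmem
  set r : ι → MvPolynomial σ R :=
    fun i => if df i ≤ d then homogeneousComponent (d - df i) (q i) else 0
  have hrf (i : ι) : r i * f i = homogeneousComponent d (q i * f i) := by
    rw [homogeneousComponent_mul_of_isHomogeneous_right (hf i), ite_mul, zero_mul]
  refine ⟨r, ?_, fun i => ⟨?_, hrf i ▸ homogeneousComponent_isHomogeneous _ _⟩⟩
  · simp_rw [hrf, ← map_sum, hq, homogeneousComponent_eq_self hh]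
  · by_cases hi : df i ≤ d
    · simp only [r, if_pos hi]
      exact (homogeneousComponent_isHomogeneous _ _).totalDegree_le.trans (Nat.sub_le _ _)
    · simp [r, if_neg hi]

end Homogeneous

section Homogenization

variable {R : Type*} [CommSemiring R] {n : ℕ}

noncomputable def dehomogenize : MvPolynomial (Fin (n + 1)) R →ₐ[R] MvPolynomial (Fin n) R :=
  aeval (Fin.cons 1 X)

/-- Since `d - μ.degree` truncates, this is a homogenization only when `g.totalDegree ≤ d`. -/
noncomputable def homogenize (d : ℕ) (g : MvPolynomial (Fin n) R) : MvPolynomial (Fin (n + 1)) R :=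
  ∑ μ ∈ g.support, monomial (Finsupp.cons (d - μ.degree) μ) (coeff μ g)

theorem dehomogenize_monomial_cons (a : ℕ) (μ : Fin n →₀ ℕ) (c : R) :
    dehomogenize (monomial (Finsupp.cons a μ) c) = monomial μ c := by
  rw [dehomogenize, aeval_monomial, monomial_eq, Finsupp.prod_fintype _ _ (fun _ => pow_zero _),
    Finsupp.prod_fintype _ _ (fun _ => pow_zero _), Fin.prod_univ_succ]
  simp [Finsupp.cons_zero, Finsupp.cons_succ]

theorem dehomogenize_monomial (s : Fin (n + 1) →₀ ℕ) (c : R) :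
    dehomogenize (monomial s c) = monomial (Finsupp.tail s) c := by
  conv_lhs => rw [← Finsupp.cons_tail s]
  exact dehomogenize_monomial_cons _ _ _

theorem totalDegree_dehomogenize_le (p : MvPolynomial (Fin (n + 1)) R) :
    (dehomogenize p).totalDegree ≤ p.totalDegree := by
  conv_lhs => rw [p.as_sum, map_sum]
  refine (totalDegree_finsetSum _ _).trans (Finset.sup_le fun s hs => ?_)
  rw [dehomogenize_monomial]
  refine (totalDegree_monomial_le _ _).trans ((le_totalDegree hs).trans' ?_)
  conv_rhs => rw [← Finsupp.cons_tail s]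
  rw [Finsupp.sum_cons]
  exact Nat.le_add_left _ _

theorem dehomogenize_homogenize (d : ℕ) (g : MvPolynomial (Fin n) R) :
    dehomogenize (homogenize d g) = g := by
  simp_rw [homogenize, map_sum, dehomogenize_monomial_cons]
  exact g.support_sum_monomial_coeff

theorem isHomogeneous_homogenize {d : ℕ} {g : MvPolynomial (Fin n) R} (hg : g.totalDegree ≤ d) :
    (homogenize d g).IsHomogeneous d := by
  refine IsHomogeneous.sum _ _ _ fun μ hμ => isHomogeneous_monomial _ ?_
  have hμd : μ.degree ≤ d := (le_totalDegree hμ).trans hg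
  change (Finsupp.cons _ μ).sum (fun _ e => e) = d
  rw [Finsupp.sum_cons]
  exact Nat.sub_add_cancel hμd

end Homogenization

end MvPolynomial

theorem mvPolynomial_filtered_noetherian_general
    (V : Type) [CommRing V] [IsPrincipalIdealRing V]
    (n : ℕ) (I : Ideal (MvPolynomial (Fin n) V)) :
    ∃ (N : ℕ) (f : Fin N → MvPolynomial (Fin n) V),
      (∀ i, f i ∈ I) ∧
      ∀ g ∈ I, ∀ m : ℕ, g.totalDegree ≤ m →
        ∃ p : Fin N → MvPolynomial (Fin n) V,
          g = ∑ i, p i * f i ∧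
          ∀ i, (p i).totalDegree ≤ m ∧ (p i * f i).totalDegree ≤ m := by
  obtain ⟨N, F, hFS, hspan⟩ := Ideal.exists_fin_family_subset_span
    {h : MvPolynomial (Fin (n + 1)) V | (∃ d, h.IsHomogeneous d) ∧ dehomogenize h ∈ I}
  choose dF hdF using fun i => (hFS i).1
  refine ⟨N, fun i => dehomogenize (F i), fun i => (hFS i).2, fun g hg m hm => ?_⟩
  have hgm := isHomogeneous_homogenize hm
  obtain ⟨r, hr, hdeg⟩ := exists_homogeneous_combination hdF hgm
    (hspan ⟨⟨m, hgm⟩, (dehomogenize_homogenize m g).symm ▸ hg⟩)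
  refine ⟨fun i => dehomogenize (r i), ?_, fun i => ⟨?_, ?_⟩⟩
  · rw [← dehomogenize_homogenize m g, hr, map_sum]
    simp only [map_mul]
  · exact (totalDegree_dehomogenize_le _).trans (hdeg i).1
  · rw [← map_mul]
    exact (totalDegree_dehomogenize_le _).trans (hdeg i).2.totalDegree_le

theorem mvPolynomial_filtered_noetherian
    (V : Type) [CommRing V] [IsDomain V] [IsPrincipalIdealRing V]
    (n : ℕ) (I : Ideal (MvPolynomial (Fin n) V)) :
    ∃ (N : ℕ) (f : Fin N → MvPolynomial (Fin n) V),
      (∀ i, f i ∈ I) ∧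
      ∀ g ∈ I, ∀ m : ℕ, g.totalDegree ≤ m →
        ∃ p : Fin N → MvPolynomial (Fin n) V,
          g = ∑ i, p i * f i ∧
          ∀ i, (p i).totalDegree ≤ m ∧ (p i * f i).totalDegree ≤ m :=
  mvPolynomial_filtered_noetherian_general V n I
end

section
/- A quotient of a filtered Noetherian V-algebra, with the induced quotient filtration, is again filtered Noetherian. Consequently, any finitely generated commutative V-algebra over a principal ideal domain V, with the filtration from a finite generating set, is filtered Noetherian. -/
/-!
Statement 16: A quotient of a filtered Noetherian `V`-algebra with the induced filtration
is again filtered Noetherian; consequently, if `V` is a principal ideal domain, every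
finitely generated commutative `V`-algebra, filtered by the powers of the span of a finite
generating set (together with `1`), is filtered Noetherian.
-/

/-- A filtered algebra `(R, F)` is filtered Noetherian if every ideal `J` has finitely many
generators `x i ∈ J` and a shift `l` such that every `y ∈ F m ∩ J` can be written
`y = Σ a_i x_i` with `a_i ∈ F (m + l)`. -/
def FilteredNoetherian (V R : Type*) [CommRing V] [CommRing R] [Algebra V R]
    (F : ℕ → Submodule V R) : Prop :=
  ∀ J : Ideal R, ∃ (n : ℕ) (x : Fin n → R) (l : ℕ),
    (∀ i, x i ∈ J) ∧
    ∀ m : ℕ, ∀ y ∈ J, y ∈ F m →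
      ∃ a : Fin n → R, (∀ i, a i ∈ F (m + l)) ∧ y = ∑ i, a i * x i


open Polynomial

section Aux

variable {V A : Type} [CommRing V] [CommRing A] [Algebra V A]

/-- The Rees subalgebra of `A[X]` attached to a submodule `M ⊆ A`: polynomials whose
`m`-th coefficient lies in `M ^ m`. -/
def reesSub (M : Submodule V A) : Subalgebra V A[X] where
  carrier := {f | ∀ m, f.coeff m ∈ M ^ m}
  add_mem' := fun hf hg m => by
    simpa [Polynomial.coeff_add] using add_mem (hf m) (hg m)
  mul_mem' := by
    intro f g hf hg m
    rw [Polynomial.coeff_mul]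
    refine Submodule.sum_mem _ ?_
    rintro ⟨i, j⟩ hij
    have h : i + j = m := Finset.HasAntidiagonal.mem_antidiagonal.mp hij
    have := Submodule.mul_mem_mul (hf i) (hg j)
    rwa [← pow_add, h] at this
  one_mem' := by
    intro m
    rcases Nat.eq_zero_or_pos m with h | h
    · subst h
      simpa [Polynomial.coeff_one] using (Submodule.one_le.mp le_rfl : (1:A) ∈ (1 : Submodule V A))
    · simpa [Polynomial.coeff_one, Nat.pos_iff_ne_zero.mp h] using zero_mem (M ^ m)
  algebraMap_mem' := by
    intro r m
    rcases Nat.eq_zero_or_pos m with h | h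
    · subst h
      simpa [Polynomial.algebraMap_apply] using Submodule.algebraMap_mem (A := A) r
    · simpa [Polynomial.algebraMap_apply, Polynomial.coeff_C, Nat.pos_iff_ne_zero.mp h] using
        zero_mem (M ^ m)

theorem mem_reesSub {M : Submodule V A} {f : A[X]} :
    f ∈ reesSub M ↔ ∀ m, f.coeff m ∈ M ^ m := Iff.rfl

theorem C_mul_X_pow_mem_adjoin {G : Set A} :
    ∀ (m : ℕ) (w : A), w ∈ (Submodule.span V G) ^ m →
      C w * X ^ m ∈ Algebra.adjoin V ((fun a => C a * X) '' G) := by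
  intro m
  induction m with
  | zero =>
    intro w hw
    rw [pow_zero] at hw
    obtain ⟨v, hv⟩ := Submodule.mem_one.mp hw
    rw [pow_zero, mul_one, ← hv, ← Polynomial.algebraMap_apply]
    exact Subalgebra.algebraMap_mem _ v
  | succ n ih =>
    intro w hw
    rw [pow_succ'] at hw
    refine Submodule.mul_induction_on hw ?_ ?_
    · intro a ha b hb
      have hCa : C a * X ∈ Algebra.adjoin V ((fun a => C a * X) '' G) := by
        refine Submodule.span_induction (p := fun a _ => C a * X ∈
          Algebra.adjoin V ((fun a => C a * X) '' G)) ?_ ?_ ?_ ?_ ha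
        · intro g hg
          exact Algebra.subset_adjoin ⟨g, hg, rfl⟩
        · simpa using zero_mem (Algebra.adjoin V ((fun a => C a * X) '' G))
        · intro x y _ _ hx hy
          rw [map_add, add_mul]
          exact add_mem hx hy
        · intro v x _ hx
          rw [← Polynomial.smul_C, smul_mul_assoc]
          exact Subalgebra.smul_mem _ hx v
      have : C (a * b) * X ^ (n + 1) = (C a * X) * (C b * X ^ n) := by
        rw [map_mul]; ring
      rw [this]
      exact mul_mem hCa (ih b hb)
    · intro x y hx hy
      rw [map_add, add_mul]
      exact add_mem hx hy

theorem reesSub_span_eq_adjoin (G : Set A) :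
    reesSub (Submodule.span V G) = Algebra.adjoin V ((fun a => C a * X) '' G) := by
  apply le_antisymm
  · intro f hf
    rw [Polynomial.as_sum_range' f (f.natDegree + 1) (Nat.lt_succ_self _)]
    refine Subalgebra.sum_mem _ ?_
    intro i _
    rw [← Polynomial.C_mul_X_pow_eq_monomial]
    exact C_mul_X_pow_mem_adjoin i _ (hf i)
  · rw [Algebra.adjoin_le_iff]
    rintro _ ⟨g, hg, rfl⟩
    intro m
    rcases Nat.eq_zero_or_pos m with h | h
    · subst h; simp [Polynomial.coeff_C_mul, Polynomial.coeff_X]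
    rcases Nat.lt_or_ge 1 m with h1 | h1
    · have : (C g * X).coeff m = 0 := by
        rw [Polynomial.coeff_C_mul, Polynomial.coeff_X]
        simp [Nat.ne_of_lt h1]
      rw [this]; exact zero_mem _
    · have hm : m = 1 := le_antisymm h1 h
      subst hm
      simpa [Polynomial.coeff_C_mul, Polynomial.coeff_X] using
        (pow_one (Submodule.span V G)) ▸ Submodule.subset_span hg

end Aux

set_option synthInstance.maxHeartbeats 1000000

section Main

variable {V A : Type} [CommRing V] [CommRing A] [Algebra V A]

theorem part2_aux [IsNoetherianRing V] {G : Set A} (hGfin : G.Finite) (h1 : (1:A) ∈ G) :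
    FilteredNoetherian V A (fun n => (Submodule.span V G) ^ n) := by
  classical
  intro J
  set M := Submodule.span V G with hM
  have hft : Algebra.FiniteType V ↥(reesSub M) := by
    rw [← Subalgebra.fg_iff_finiteType, hM, reesSub_span_eq_adjoin]
    exact Subalgebra.fg_def.mpr ⟨_, hGfin.image _, rfl⟩
  haveI := hft
  have hN : IsNoetherianRing ↥(reesSub M) := Algebra.FiniteType.isNoetherianRing V _
  haveI : IsNoetherian ↥(reesSub M) ↥(reesSub M) := hN
  let Jstar : Ideal ↥(reesSub M) :=
    { carrier := {f | ∀ m, (f : A[X]).coeff m ∈ J}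
      add_mem' := fun {f g} hf hg m => by
        push_cast
        simpa using J.add_mem (hf m) (hg m)
      zero_mem' := fun m => by simpa using J.zero_mem
      smul_mem' := fun c f hf => by
        intro m
        have hcoe : ((c • f : ↥(reesSub M)) : A[X]) = (c : A[X]) * (f : A[X]) := rfl
        rw [hcoe, Polynomial.coeff_mul]
        exact Ideal.sum_mem _ fun p _ => J.mul_mem_left _ (hf p.2) }
  obtain ⟨r, g, hg⟩ :=
    Submodule.fg_iff_exists_fin_generating_family.mp (IsNoetherian.noetherian Jstar)
  set D := Finset.univ.sup (fun j : Fin r => ((g j : A[X]).natDegree)) with hD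
  have hgJ : ∀ j, g j ∈ Jstar := by
    intro j
    rw [← hg]
    exact Submodule.subset_span (Set.mem_range_self _)
  refine ⟨r * (D+1),
    fun i => ((g (finProdFinEquiv.symm i).1 : A[X]).coeff (finProdFinEquiv.symm i).2), 0, ?_, ?_⟩
  · intro i
    exact hgJ _ _
  · intro m y hyJ hyM
    have hf0RA : (C y * X ^ m) ∈ reesSub M := by
      intro k
      rcases eq_or_ne k m with rfl | hne
      · simpa [Polynomial.coeff_C_mul, Polynomial.coeff_X_pow] using hyM
      · rw [Polynomial.coeff_C_mul, Polynomial.coeff_X_pow, if_neg hne, mul_zero]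
        exact zero_mem _
    have hF0 : (⟨C y * X ^ m, hf0RA⟩ : ↥(reesSub M)) ∈ Jstar := by
      intro k
      rcases eq_or_ne k m with rfl | hne
      · simpa [Polynomial.coeff_C_mul, Polynomial.coeff_X_pow] using hyJ
      · show (C y * X ^ m).coeff k ∈ J
        rw [Polynomial.coeff_C_mul, Polynomial.coeff_X_pow, if_neg hne, mul_zero]
        exact J.zero_mem
    rw [← hg] at hF0
    obtain ⟨c, hc⟩ := (Submodule.mem_span_range_iff_exists_fun _).mp hF0
    -- extract coefficient m
    have key : y = ∑ j : Fin r, ((c j : A[X]) * (g j : A[X])).coeff m := by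
      have h := congrArg (fun f : ↥(reesSub M) => (f : A[X]).coeff m) hc
      simp only at h
      have hL : ((⟨C y * X ^ m, hf0RA⟩ : ↥(reesSub M)) : A[X]).coeff m = y := by
        simp [Polynomial.coeff_C_mul, Polynomial.coeff_X_pow]
      have hR : ((↑(∑ i, c i • g i) : A[X])).coeff m
          = ∑ j : Fin r, ((c j : A[X]) * (g j : A[X])).coeff m := by
        simp only [smul_eq_mul, AddSubmonoidClass.coe_finset_sum, MulMemClass.coe_mul,
          Polynomial.finset_sum_coeff]
      rw [← hL, ← h, hR]
    have coeffmul : ∀ (p q : A[X]), q.natDegree ≤ D →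
        (p * q).coeff m = ∑ k : Fin (D+1),
          (if (k:ℕ) ≤ m then p.coeff (m - (k:ℕ)) else 0) * q.coeff (k:ℕ) := by
      intro p q hq
      rw [mul_comm, Polynomial.coeff_mul, Finset.Nat.sum_antidiagonal_eq_sum_range_succ_mk]
      rw [Fin.sum_univ_eq_sum_range (fun k => (if k ≤ m then p.coeff (m-k) else 0) * q.coeff k) (D+1)]
      set N := max m D + 1 with hN
      have h1 : ∑ k ∈ Finset.range (m+1), q.coeff k * p.coeff (m-k)
          = ∑ k ∈ Finset.range N, (if k ≤ m then p.coeff (m-k) else 0) * q.coeff k := by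
        have e1 : ∑ k ∈ Finset.range (m+1), q.coeff k * p.coeff (m-k)
            = ∑ k ∈ Finset.range (m+1), (if k ≤ m then p.coeff (m-k) else 0) * q.coeff k := by
          refine Finset.sum_congr rfl fun k hk => ?_
          have : k ≤ m := Nat.lt_succ_iff.mp (Finset.mem_range.mp hk)
          rw [if_pos this, mul_comm]
        rw [e1]
        refine Finset.sum_subset (Finset.range_subset_range.mpr (by omega)) ?_
        intro k _ hk
        have : ¬ k ≤ m := by
          simp only [Finset.mem_range] at hk; omega
        rw [if_neg this, zero_mul]
      have h2 : ∑ k ∈ Finset.range (D+1), (if k ≤ m then p.coeff (m-k) else 0) * q.coeff k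
          = ∑ k ∈ Finset.range N, (if k ≤ m then p.coeff (m-k) else 0) * q.coeff k := by
        refine Finset.sum_subset (Finset.range_subset_range.mpr (by omega)) ?_
        intro k _ hk
        have hk' : D < k := by
          simp only [Finset.mem_range] at hk; omega
        rw [Polynomial.coeff_eq_zero_of_natDegree_lt (lt_of_le_of_lt hq hk'), mul_zero]
      rw [h1, ← h2]
    refine ⟨fun i => if ((finProdFinEquiv.symm i).2 : ℕ) ≤ m
        then (c (finProdFinEquiv.symm i).1 : A[X]).coeff (m - ((finProdFinEquiv.symm i).2 : ℕ))
        else 0, ?_, ?_⟩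
    · intro i
      rw [add_zero]
      dsimp only
      split_ifs with h
      · have hle : M ^ (m - ((finProdFinEquiv.symm i).2 : ℕ)) ≤ M ^ m :=
          pow_le_pow_right' (Submodule.one_le.mpr (Submodule.subset_span h1)) (Nat.sub_le m _)
        exact hle ((c (finProdFinEquiv.symm i).1).2 _)
      · exact zero_mem _
    · rw [key]
      rw [← Equiv.sum_comp finProdFinEquiv
        (fun i => (if ((finProdFinEquiv.symm i).2 : ℕ) ≤ m
          then (c (finProdFinEquiv.symm i).1 : A[X]).coeff (m - ((finProdFinEquiv.symm i).2 : ℕ))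
          else 0) * ((g (finProdFinEquiv.symm i).1 : A[X]).coeff (finProdFinEquiv.symm i).2))]
      simp only [Equiv.symm_apply_apply]
      rw [Fintype.sum_prod_type]
      refine Finset.sum_congr rfl fun j _ => ?_
      exact coeffmul (c j : Polynomial A) (g j : Polynomial A) (by rw [hD]; exact Finset.le_sup (f := fun j : Fin r => ((g j : Polynomial A)).natDegree) (Finset.mem_univ j))

end Main

theorem filtered_noetherian_quotient_and_finite_type
    (V : Type) [CommRing V] :
    -- a quotient of a filtered Noetherian algebra is filtered Noetherian
    (∀ (R : Type) (_ : CommRing R) (_ : Algebra V R)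
      (F : ℕ → Submodule V R) (I : Ideal R),
      FilteredNoetherian V R F →
      FilteredNoetherian V (R ⧸ I)
        (fun n => Submodule.map (Ideal.Quotient.mkₐ V I).toLinearMap (F n))) ∧
    -- consequently: finitely generated commutative algebras over a PID, with the
    -- filtration coming from a finite generating set, are filtered Noetherian
    (∀ (_ : IsDomain V) (_ : IsPrincipalIdealRing V)
      (A : Type) (_ : CommRing A) (_ : Algebra V A) (S : Finset A),
      Algebra.adjoin V (S : Set A) = ⊤ →
      FilteredNoetherian V A
        (fun n => (Submodule.span V (insert (1 : A) (S : Set A))) ^ n)) := by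
  constructor
  · intro R _ _ F I hFN J
    obtain ⟨n, x, l, hxJ, hmain⟩ := hFN (J.comap (Ideal.Quotient.mk I))
    refine ⟨n, fun i => Ideal.Quotient.mk I (x i), l, fun i => hxJ i, ?_⟩
    intro m y hyJ hyF
    obtain ⟨s, hsF, hsy⟩ := hyF
    have hsy' : Ideal.Quotient.mk I s = y := hsy
    have hsJ : s ∈ J.comap (Ideal.Quotient.mk I) := by
      rw [Ideal.mem_comap, hsy']; exact hyJ
    obtain ⟨a, haF, hay⟩ := hmain m s hsJ hsF
    refine ⟨fun i => Ideal.Quotient.mk I (a i), fun i => ⟨a i, haF i, rfl⟩, ?_⟩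
    rw [← hsy', hay, map_sum]
    exact Finset.sum_congr rfl fun i _ => by rw [map_mul]
  · intro _ hpir A _ _ S _
    haveI := hpir
    haveI : IsNoetherianRing V := PrincipalIdealRing.isNoetherianRing
    exact part2_aux (Set.Finite.insert 1 S.finite_toSet) (Set.mem_insert 1 _)
end

section
/- For any set D, the complete bornological tensor product C₀(D₁,V) ⊗̂ C₀(D₃,V) is isometrically isomorphic to C₀(D₁ × D₃, V), and if f : C₀(D₁,V) → C₀(D₂,V) and g : C₀(D₃,V) → C₀(D₄,V) are injective bounded V-linear maps between such modules, then the induced map f ⊗̂ g : C₀(D₁×D₃,V) → C₀(D₂×D₄,V) is injective. -/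
/-!
Modulo `πⁿ`, an element of `C₀(D₁ × D₃, V)` agrees with its restriction to a finite set, which
is a finite sum of products of point masses `δₓ ⊗ δ_y`; so the algebraic tensor product is
`π`-adically dense, and completeness of `C₀` is inherited pointwise from `V`. A tensor
`∑ bᵢ ⊗ nᵢ` can be written with the `bᵢ` linearly independent, since finitely generated
torsion-free modules over a PID are free; if its image `(x, y) ↦ ∑ bᵢ(x) nᵢ(y)` vanishes, then
evaluating at each `y` kills all `nᵢ`, which gives injectivity.

The map `f ⊗̂ g` is built fibrewise: `id ⊗̂ g` applies `g` to each slice `h(x, ·)`, so it is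
injective when `g` is, and `f ⊗̂ id` is `id ⊗̂ f` conjugated by swapping the factors. It is the
only extension of `a ⊗ b ↦ f a ⊗ g b` because the tensors are dense and `C₀(D₂ × D₄, V)` is
`π`-adically separated.
-/

/-- `C₀(D, V)` as a submodule of `D → V`: functions whose values are eventually divisible
by every power of `π` outside a finite set. -/
def C0sub (V : Type) [CommRing V] (π : V) (D : Type) : Submodule V (D → V) where
  carrier := {f | ∀ n : ℕ, {x : D | ¬ π ^ n ∣ f x}.Finite}
  zero_mem' := fun n => Set.finite_empty.subset fun x hx => absurd (dvd_zero _) hx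
  add_mem' := fun {f g} hf hg n => ((hf n).union (hg n)).subset (by
    intro x hx
    by_cases h1 : π ^ n ∣ f x
    · by_cases h2 : π ^ n ∣ g x
      · exact absurd (dvd_add h1 h2) hx
      · exact Or.inr h2
    · exact Or.inl h1)
  smul_mem' := fun c f hf n => (hf n).subset (by
    intro x hx h
    exact hx (by simpa using h.mul_left c))

/-- The elementary "tensor" of two `C₀`-functions: `(a ⊗ b)(x, y) = a(x)·b(y)`. -/
def mulElem {V : Type} [CommRing V] {π : V} {D1 D3 : Type}
    (a : ↥(C0sub V π D1)) (b : ↥(C0sub V π D3)) : ↥(C0sub V π (D1 × D3)) :=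
  ⟨fun p => a.1 p.1 * b.1 p.2, fun n => ((a.2 n).prod (b.2 n)).subset (by
    intro p hp
    exact Set.mem_prod.mpr
      ⟨fun h => hp (h.mul_right _), fun h => hp (h.mul_left _)⟩)⟩

/-- The multiplication bilinear map `C₀(D₁) × C₀(D₃) → C₀(D₁ × D₃)`. -/
def mulBilin (V : Type) [CommRing V] (π : V) (D1 D3 : Type) :
    ↥(C0sub V π D1) →ₗ[V] ↥(C0sub V π D3) →ₗ[V] ↥(C0sub V π (D1 × D3)) :=
  LinearMap.mk₂ V (fun a b => mulElem a b)
    (fun a a' b => Subtype.ext (funext fun p => add_mul _ _ _))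
    (fun c a b => Subtype.ext (funext fun p => smul_mul_assoc c _ _))
    (fun a b b' => Subtype.ext (funext fun p => mul_add _ _ _))
    (fun c a b => Subtype.ext (funext fun p => mul_smul_comm c _ _))

open TensorProduct

theorem Submodule.mem_span_singleton_pow_smul_top_iff {R M : Type*} [CommRing R]
    [AddCommGroup M] [Module R M] {r : R} {n : ℕ} {x : M} :
    x ∈ (Ideal.span {r} ^ n • ⊤ : Submodule R M) ↔ ∃ y, r ^ n • y = x := by
  simp [Ideal.span_singleton_pow, Submodule.ideal_span_singleton_smul,
    Submodule.mem_smul_pointwise_iff_exists]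

theorem Submodule.mem_span_singleton_pow_smul_top_iff_dvd {R : Type*} [CommRing R] {r : R}
    {n : ℕ} {a : R} : a ∈ (Ideal.span {r} ^ n • ⊤ : Submodule R R) ↔ r ^ n ∣ a := by
  rw [Submodule.mem_span_singleton_pow_smul_top_iff, dvd_iff_exists_eq_mul_right]
  exact exists_congr fun _ => eq_comm

theorem LinearMap.eq_of_eqOn_of_adic_dense {R M N : Type*} [CommRing R] [AddCommGroup M]
    [Module R M] [AddCommGroup N] [Module R N] {I : Ideal R} [IsHausdorff I N]
    {S : Submodule R M} (hS : ∀ x n, ∃ s ∈ S, x - s ∈ (I ^ n • ⊤ : Submodule R M))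
    {φ ψ : M →ₗ[R] N} (h : ∀ s ∈ S, φ s = ψ s) : φ = ψ := by
  ext x
  rw [IsHausdorff.eq_iff_smodEq (I := I)]
  intro n
  obtain ⟨s, hs, hxs⟩ := hS x n
  have hmap : (φ - ψ) (x - s) ∈ (I ^ n • ⊤ : Submodule R N) := by
    have := Submodule.mem_map_of_mem (f := φ - ψ) hxs
    rw [Submodule.map_smul''] at this
    exact Submodule.smul_mono le_rfl le_top this
  rw [SModEq.sub_mem]
  simpa [h s hs] using hmap

theorem TensorProduct.lift_injective_of_linearIndependent {R M N P : Type*} [CommRing R]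
    [IsDomain R] [IsPrincipalIdealRing R] [AddCommGroup M] [Module R M] [Module.IsTorsionFree R M]
    [AddCommGroup N] [Module R N] [AddCommGroup P] [Module R P] (β : M →ₗ[R] N →ₗ[R] P)
    (hβ : ∀ {k : ℕ} (m : Fin k → M), LinearIndependent R m →
      ∀ n : Fin k → N, ∑ i, β (m i) (n i) = 0 → n = 0) :
    Function.Injective (lift β) := by
  rw [injective_iff_map_eq_zero]
  intro t ht
  obtain ⟨J, hJ, t, rfl⟩ := Submodule.exists_fg_le_eq_rTensor_subtype t
  have : Module.Finite R J := Module.Finite.iff_fg.mpr hJ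
  obtain ⟨k, b⟩ := Module.basisOfFiniteTypeTorsionFree' (R := R) (M := J)
  classical
  obtain ⟨c, rfl⟩ := (equivFinsuppOfBasisLeft b).symm.surjective t
  have hc : c = 0 := DFunLike.coe_injective <| by
    refine hβ (fun i => (b i : M)) (b.linearIndependent.map' J.subtype J.ker_subtype) c ?_
    simpa [Finsupp.sum_fintype] using ht
  simp [hc]

namespace C0sub

variable {V : Type} [CommRing V] {π : V}

theorem pow_dvd_apply_of_mem {D : Type} {n : ℕ} {h : ↥(C0sub V π D)}
    (hh : h ∈ (Ideal.span {π} ^ n • ⊤ : Submodule V ↥(C0sub V π D))) (x : D) :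
    π ^ n ∣ h.1 x := by
  obtain ⟨h', rfl⟩ := Submodule.mem_span_singleton_pow_smul_top_iff.1 hh
  exact dvd_mul_right _ _

theorem mem_of_finite_support {D : Type} {f : D → V} (hf : (Function.support f).Finite) :
    f ∈ C0sub V π D :=
  fun _ => hf.subset fun _ hx h0 => hx (h0 ▸ dvd_zero _)

theorem mulElem_apply {D1 D3 : Type} (a : ↥(C0sub V π D1)) (b : ↥(C0sub V π D3))
    (p : D1 × D3) : (mulElem a b).1 p = a.1 p.1 * b.1 p.2 := rfl

theorem mulBilin_apply {D1 D3 : Type} (a : ↥(C0sub V π D1)) (b : ↥(C0sub V π D3)) :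
    mulBilin V π D1 D3 a b = mulElem a b := rfl

theorem lift_mulBilin_tmul {D1 D3 : Type} (a : ↥(C0sub V π D1)) (b : ↥(C0sub V π D3)) :
    lift (mulBilin V π D1 D3) (a ⊗ₜ b) = mulElem a b := rfl

open Classical in
noncomputable def single {D : Type} (x : D) (c : V) : ↥(C0sub V π D) :=
  ⟨Pi.single x c, mem_of_finite_support ((Set.finite_singleton x).subset Pi.support_single_subset)⟩

theorem mulElem_single_single {D1 D3 : Type} (x : D1) (y : D3) (c : V) :
    mulElem (single (π := π) x c) (single y 1) = single (x, y) c := by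
  ext ⟨x', y'⟩
  by_cases hx : x' = x <;> by_cases hy : y' = y <;> simp [mulElem_apply, single, hx, hy]

def comap {D D' : Type} (e : D → D') (he : Function.Injective e) :
    ↥(C0sub V π D') →ₗ[V] ↥(C0sub V π D) where
  toFun h := ⟨h.1 ∘ e, fun n => (h.2 n).preimage he.injOn⟩
  map_add' _ _ := rfl
  map_smul' _ _ := rfl

abbrev comm (A B : Type) : ↥(C0sub V π (A × B)) →ₗ[V] ↥(C0sub V π (B × A)) :=
  comap Prod.swap Prod.swap_injective

theorem comm_mulElem {A B : Type} (a : ↥(C0sub V π A)) (b : ↥(C0sub V π B)) :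
    comm A B (mulElem a b) = mulElem b a :=
  Subtype.ext (funext fun _ => mul_comm _ _)

theorem comm_injective (A B : Type) : Function.Injective (comm (V := V) (π := π) A B) :=
  Function.LeftInverse.injective (g := comm B A) fun _ => rfl

section IsDomain

variable [IsDomain V] (hπ : π ≠ 0)
include hπ

theorem mem_pow_smul_top_of_dvd {D : Type} {n : ℕ} {h : ↥(C0sub V π D)}
    (hh : ∀ x, π ^ n ∣ h.1 x) : h ∈ (Ideal.span {π} ^ n • ⊤ : Submodule V ↥(C0sub V π D)) := by
  choose q hq using hh
  have hq_mem : q ∈ C0sub V π D := fun m => (h.2 (n + m)).subset fun x hx hdvd => hx <|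
    (mul_dvd_mul_iff_left (pow_ne_zero n hπ)).1 (by rwa [hq x, pow_add] at hdvd)
  exact Submodule.mem_span_singleton_pow_smul_top_iff.2
    ⟨⟨q, hq_mem⟩, Subtype.ext (funext fun x => (hq x).symm)⟩

theorem mem_pow_smul_top_iff {D : Type} {n : ℕ} {h : ↥(C0sub V π D)} :
    h ∈ (Ideal.span {π} ^ n • ⊤ : Submodule V ↥(C0sub V π D)) ↔ ∀ x, π ^ n ∣ h.1 x :=
  ⟨pow_dvd_apply_of_mem, mem_pow_smul_top_of_dvd hπ⟩

theorem isAdicComplete (hV : IsAdicComplete (Ideal.span {π}) V) (D : Type) :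
    IsAdicComplete (Ideal.span {π}) ↥(C0sub V π D) := by
  simp only [isAdicComplete_iff, isHausdorff_iff, isPrecomplete_iff, SModEq.sub_mem, sub_zero,
    mem_pow_smul_top_iff hπ, Submodule.mem_span_singleton_pow_smul_top_iff_dvd] at hV ⊢
  refine ⟨fun h hh => Subtype.ext (funext fun x => hV.1 _ fun n => hh n x), fun f hf => ?_⟩
  choose L hL using fun x => hV.2 (fun n => (f n).1 x) fun hmn => hf hmn x
  have hL_mem : L ∈ C0sub V π D := fun n => ((f n).2 n).subset fun x hx hdvd =>
    hx (by simpa using dvd_sub hdvd (hL x n))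
  exact ⟨⟨L, hL_mem⟩, fun n x => hL x n⟩

omit hπ in
theorem lift_mulBilin_injective [IsPrincipalIdealRing V] (D1 D3 : Type) :
    Function.Injective (lift (mulBilin V π D1 D3)) := by
  refine lift_injective_of_linearIndependent _ fun a ha b hab => funext fun i =>
    Subtype.ext (funext fun y => ?_)
  refine Fintype.linearIndependent_iff.1 ha (fun j => (b j).1 y) ?_ i
  refine Subtype.ext (funext fun x => ?_)
  simpa [Submodule.coe_sum, Finset.sum_apply, mulBilin_apply, mulElem_apply, mul_comm] using
    congr_arg (fun h => h.1 (x, y)) hab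

theorem exists_sub_mem_pow_smul_top {D1 D3 : Type} (h : ↥(C0sub V π (D1 × D3))) (n : ℕ) :
    ∃ s ∈ LinearMap.range (lift (mulBilin V π D1 D3)),
      h - s ∈ (Ideal.span {π} ^ n • ⊤ : Submodule V ↥(C0sub V π (D1 × D3))) := by
  classical
  set S := (h.2 n).toFinset
  refine ⟨∑ p ∈ S, single p (h.1 p), Submodule.sum_mem _ fun p _ =>
    ⟨single p.1 (h.1 p) ⊗ₜ single p.2 1, mulElem_single_single _ _ _⟩, ?_⟩
  rw [mem_pow_smul_top_iff hπ]
  intro q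
  by_cases hq : q ∈ S
  · simp [single, Finset.sum_pi_single, hq]
  · have hdvd : π ^ n ∣ h.1 q := by simpa [S] using hq
    simpa [Submodule.coe_sum, Finset.sum_apply, single, Finset.sum_pi_single, hq] using hdvd

theorem pow_dvd_map_apply {D D' : Type} (g : ↥(C0sub V π D) →ₗ[V] ↥(C0sub V π D'))
    {n : ℕ} {b : ↥(C0sub V π D)} (hb : ∀ y, π ^ n ∣ b.1 y) (z : D') : π ^ n ∣ (g b).1 z := by
  obtain ⟨b', rfl⟩ :=
    Submodule.mem_span_singleton_pow_smul_top_iff.1 (mem_pow_smul_top_of_dvd hπ hb)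
  rw [map_smul]
  exact dvd_mul_right _ _

def lTensor {D1 D3 D4 : Type} (g : ↥(C0sub V π D3) →ₗ[V] ↥(C0sub V π D4)) :
    ↥(C0sub V π (D1 × D3)) →ₗ[V] ↥(C0sub V π (D1 × D4)) where
  toFun h := ⟨fun p => (g (comap (Prod.mk p.1) (Prod.mk_right_injective p.1) h)).1 p.2,
    fun n => by
      refine (((h.2 n).image Prod.fst).biUnion fun x _ =>
        ((g (comap (Prod.mk x) (Prod.mk_right_injective x) h)).2 n).image (Prod.mk x)).subset ?_
      rintro ⟨x, z⟩ hxz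
      refine Set.mem_biUnion (x := x) ?_ ⟨z, hxz, rfl⟩
      by_contra hx
      have hslice : ∀ y, π ^ n ∣ (comap (Prod.mk x) (Prod.mk_right_injective x) h).1 y :=
        fun y => not_not.1 fun hy => hx ⟨(x, y), hy, rfl⟩
      exact hxz (pow_dvd_map_apply hπ g hslice z)⟩
  map_add' h h' := Subtype.ext (funext fun p => by simp)
  map_smul' c h := Subtype.ext (funext fun p => by simp)

theorem lTensor_apply {D1 D3 D4 : Type} (g : ↥(C0sub V π D3) →ₗ[V] ↥(C0sub V π D4))
    (h : ↥(C0sub V π (D1 × D3))) (p : D1 × D4) :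
    (lTensor hπ g h).1 p = (g (comap (Prod.mk p.1) (Prod.mk_right_injective p.1) h)).1 p.2 :=
  rfl

theorem lTensor_mulElem {D1 D3 D4 : Type} (g : ↥(C0sub V π D3) →ₗ[V] ↥(C0sub V π D4))
    (a : ↥(C0sub V π D1)) (b : ↥(C0sub V π D3)) :
    lTensor hπ g (mulElem a b) = mulElem a (g b) := by
  ext p
  have hslice : comap (Prod.mk p.1) (Prod.mk_right_injective p.1) (mulElem a b) = a.1 p.1 • b :=
    rfl
  rw [lTensor_apply, hslice, map_smul]
  rfl

theorem lTensor_injective {D1 D3 D4 : Type} {g : ↥(C0sub V π D3) →ₗ[V] ↥(C0sub V π D4)}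
    (hg : Function.Injective g) : Function.Injective (lTensor (D1 := D1) hπ g) := by
  intro h h' hh
  ext ⟨x, y⟩
  have hslice : g (comap (Prod.mk x) (Prod.mk_right_injective x) h) =
      g (comap (Prod.mk x) (Prod.mk_right_injective x) h') :=
    Subtype.ext (funext fun z => congr_arg (fun k => k.1 (x, z)) hh)
  exact congr_arg (fun k => k.1 y) (hg hslice)

def map {D1 D2 D3 D4 : Type} (f : ↥(C0sub V π D1) →ₗ[V] ↥(C0sub V π D2))
    (g : ↥(C0sub V π D3) →ₗ[V] ↥(C0sub V π D4)) :
    ↥(C0sub V π (D1 × D3)) →ₗ[V] ↥(C0sub V π (D2 × D4)) :=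
  comm D4 D2 ∘ₗ lTensor hπ f ∘ₗ comm D1 D4 ∘ₗ lTensor hπ g

theorem map_mulElem {D1 D2 D3 D4 : Type} (f : ↥(C0sub V π D1) →ₗ[V] ↥(C0sub V π D2))
    (g : ↥(C0sub V π D3) →ₗ[V] ↥(C0sub V π D4)) (a : ↥(C0sub V π D1)) (b : ↥(C0sub V π D3)) :
    map hπ f g (mulElem a b) = mulElem (f a) (g b) := by
  simp only [map, LinearMap.comp_apply, lTensor_mulElem, comm_mulElem]

theorem map_injective {D1 D2 D3 D4 : Type} {f : ↥(C0sub V π D1) →ₗ[V] ↥(C0sub V π D2)}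
    {g : ↥(C0sub V π D3) →ₗ[V] ↥(C0sub V π D4)} (hf : Function.Injective f)
    (hg : Function.Injective g) : Function.Injective (map hπ f g) :=
  (comm_injective _ _).comp <| (lTensor_injective hπ hf).comp <|
    (comm_injective _ _).comp (lTensor_injective hπ hg)

end IsDomain

end C0sub

open C0sub in
theorem c0_tensor_product_and_injectivity
    (V : Type) [CommRing V] [IsDomain V] [IsDiscreteValuationRing V]
    (π : V) (hπ : Irreducible π)
    (hV : IsAdicComplete (Ideal.span {π}) V)
    (D1 D2 D3 D4 : Type)
    (f : ↥(C0sub V π D1) →ₗ[V] ↥(C0sub V π D2)) (hf : Function.Injective f)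
    (g : ↥(C0sub V π D3) →ₗ[V] ↥(C0sub V π D4)) (hg : Function.Injective g) :
    -- `C₀(D₁ × D₃, V)` is the completed tensor product `C₀(D₁,V) ⊗̂ C₀(D₃,V)`:
    IsAdicComplete (Ideal.span {π}) ↥(C0sub V π (D1 × D3)) ∧
    Function.Injective (TensorProduct.lift (mulBilin V π D1 D3)) ∧
    (∀ h : ↥(C0sub V π (D1 × D3)), ∀ n : ℕ,
      ∃ t : TensorProduct V ↥(C0sub V π D1) ↥(C0sub V π D3),
        ∃ h' : ↥(C0sub V π (D1 × D3)),
          h - TensorProduct.lift (mulBilin V π D1 D3) t = π ^ n • h') ∧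
    -- the induced map `f ⊗̂ g` exists, is unique, and is injective
    (∃ H : ↥(C0sub V π (D1 × D3)) →ₗ[V] ↥(C0sub V π (D2 × D4)),
      (∀ a b, H (mulElem a b) = mulElem (f a) (g b)) ∧
      Function.Injective H ∧
      ∀ H' : ↥(C0sub V π (D1 × D3)) →ₗ[V] ↥(C0sub V π (D2 × D4)),
        (∀ a b, H' (mulElem a b) = mulElem (f a) (g b)) → H' = H) := by
  have hπ0 : π ≠ 0 := hπ.ne_zero
  have := (isAdicComplete hπ0 hV (D2 × D4)).toIsHausdorff
  refine ⟨isAdicComplete hπ0 hV _, lift_mulBilin_injective D1 D3, fun h n => ?_,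
    map hπ0 f g, map_mulElem hπ0 f g, map_injective hπ0 hf hg,
    fun H' hH' => LinearMap.eq_of_eqOn_of_adic_dense (exists_sub_mem_pow_smul_top hπ0) ?_⟩
  · obtain ⟨_, ⟨t, rfl⟩, hmem⟩ := exists_sub_mem_pow_smul_top hπ0 h n
    obtain ⟨h', hh'⟩ := Submodule.mem_span_singleton_pow_smul_top_iff.1 hmem
    exact ⟨t, h', hh'.symm⟩
  · rintro _ ⟨t, rfl⟩
    have hcomp : H' ∘ₗ lift (mulBilin V π D1 D3) = map hπ0 f g ∘ₗ lift (mulBilin V π D1 D3) :=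
      TensorProduct.ext' fun a b => by
        simp only [LinearMap.comp_apply, lift_mulBilin_tmul, hH', map_mulElem]
    exact LinearMap.congr_fun hcomp t
end
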